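/- For every integer K ≥ 3, every c ∈ (2, K), and every α ∈ (0, β_K), one has J_K(α, ζ_sqrt(α); c) ≤ (1/2 − 1/K) · α · ln(α/β_K). In particular, the right-hand side is negative on (0, β_K), and for any δ_K > 0 there exists ε_K > 0, independent of c, such that J_K(α, ζ_sqrt(α); c) < −ε_K for all α ∈ [δ_K, 0.99·β_K] and all c ∈ (2, K). -/

import Mathlib

/-- `Q(z) = z(e^z − 1)/(e^z − 1 − z)`. -/
noncomputable def Qfun (z : ℝ) : ℝ := z * (Real.exp z - 1) / (Real.exp z - 1 - z)

/-- `exp₂(z) = e^z − 1 − z`. -/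
noncomputable def exp2 (z : ℝ) : ℝ := Real.exp z - 1 - z

/-- Entropy `H(α) = −α ln α − (1−α) ln(1−α)` (with `0 · ln 0 = 0`,
automatic since `Real.log 0 = 0`). -/
noncomputable def Hent (a : ℝ) : ℝ := -(a * Real.log a) - (1 - a) * Real.log (1 - a)

/-- `J_K(α, (ζ₁,ζ₂); c)`, with `lam` the unique positive solution of `Q(lam) = c`
passed as an explicit parameter. -/
noncomputable def JK (K : ℕ) (a z1 z2 c lam : ℝ) : ℝ :=
  (1 / (K : ℝ)) * Hent a + a * Real.log (a / z1) + (1 - a) * Real.log ((1 - a) / z2)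
    + (1 / c) * Real.log
        ((exp2 (lam * (z2 + z1)) + exp2 (lam * (z2 - z1))) / (2 * exp2 lam))

/-- `L_K(α, c) = c · J_K(α, ζ_lin(α); c)` where `ζ_lin(α) = (α, 1−α)`. -/
noncomputable def LK (K : ℕ) (a c lam : ℝ) : ℝ := c * JK K a a (1 - a) c lam

/-- `β_K = exp(−(1/K + ln √(K−1) − 1 + K/(2(K−1)))/(1/2 − 1/K))`. -/
noncomputable def betaK (K : ℕ) : ℝ :=
  Real.exp (-(1 / (K : ℝ) + Real.log (Real.sqrt ((K : ℝ) - 1)) - 1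
      + (K : ℝ) / (2 * ((K : ℝ) - 1))) / (1 / 2 - 1 / (K : ℝ)))


-- auxiliary lemmas


lemma exp2_nonneg (z : ℝ) : 0 ≤ exp2 z := by
  have := Real.add_one_le_exp z
  simp [exp2]; linarith

lemma exp2_pos {z : ℝ} (hz : z ≠ 0) : 0 < exp2 z := by
  have := Real.add_one_lt_exp hz
  simp [exp2]; linarith

/-- slope monotonicity of exp from 0 -/
lemma slope_exp_mono {u v : ℝ} (hu : 0 < u) (huv : u ≤ v) :
    v * (Real.exp u - 1) ≤ u * (Real.exp v - 1) := by
  have h1 : (1 - u) * Real.exp u ≤ 1 := by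
    have := Real.add_one_le_exp (-u)
    have hep : (0:ℝ) < Real.exp u := Real.exp_pos u
    have : (1 - u) ≤ Real.exp (-u) := by linarith
    calc (1-u) * Real.exp u ≤ Real.exp (-u) * Real.exp u := by
          nlinarith [Real.exp_pos u]
      _ = 1 := by rw [← Real.exp_add]; simp
  have h2 : 1 + (v - u) ≤ Real.exp (v - u) := by linarith [Real.add_one_le_exp (v-u)]
  have h3 : Real.exp v = Real.exp u * Real.exp (v - u) := by
    rw [← Real.exp_add]; ring_nf
  have hA : 0 < Real.exp u := Real.exp_pos u
  nlinarith [mul_nonneg (mul_nonneg hu.le hA.le) (by linarith : (0:ℝ) ≤ Real.exp (v-u) - (1 + (v-u))),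
    mul_nonneg (by linarith : (0:ℝ) ≤ v - u) (by nlinarith : (0:ℝ) ≤ u * Real.exp u - (Real.exp u - 1))]

/-- antitonicity of (e^z - 1)/exp2 z on (0,∞) -/
lemma deriv_antitone {u v : ℝ} (hu : 0 < u) (huv : u ≤ v) :
    (Real.exp v - 1) / exp2 v ≤ (Real.exp u - 1) / exp2 u := by
  have hv : 0 < v := lt_of_lt_of_le hu huv
  have h2u : 0 < exp2 u := exp2_pos hu.ne'
  have h2v : 0 < exp2 v := exp2_pos hv.ne'
  rw [div_le_div_iff₀ h2v h2u]
  have key := slope_exp_mono hu huv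
  simp only [exp2]
  nlinarith [Real.exp_pos u, Real.exp_pos v]

lemma hasDerivAt_logexp2 {z : ℝ} (hz : z ≠ 0) :
    HasDerivAt (fun t => Real.log (exp2 t)) ((Real.exp z - 1) / exp2 z) z := by
  have h1 : HasDerivAt exp2 (Real.exp z - 1) z := by
    have := ((Real.hasDerivAt_exp z).sub_const 1).sub (hasDerivAt_id z)
    have h2 : HasDerivAt (fun t => Real.exp t - 1 - t) (Real.exp z - 1) z := this.congr_deriv (by ring)
    exact h2
  exact h1.log (exp2_pos hz).ne'

/-- tangent-line bound for the concave function log ∘ exp2 on (0,∞) -/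
lemma tangent {lam x : ℝ} (hlam : 0 < lam) (hx : 0 < x) :
    Real.log (exp2 x) ≤ Real.log (exp2 lam)
      + (Real.exp lam - 1) / exp2 lam * (x - lam) := by
  set f : ℝ → ℝ := fun t => Real.log (exp2 t) with hf
  set f' : ℝ → ℝ := fun t => (Real.exp t - 1) / exp2 t with hf'
  have hd : ∀ t : ℝ, 0 < t → HasDerivAt f (f' t) t := fun t ht => hasDerivAt_logexp2 ht.ne'
  rcases lt_trichotomy x lam with h | h | h
  · have hcont : ContinuousOn f (Set.Icc x lam) := by
      intro t ht
      exact (hd t (lt_of_lt_of_le hx ht.1)).continuousAt.continuousWithinAt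
    obtain ⟨c, hc, hceq⟩ := exists_hasDerivAt_eq_slope f f' h hcont
      (fun t ht => hd t (lt_trans hx ht.1))
    have hle : f' lam ≤ f' c := deriv_antitone (lt_trans hx hc.1) hc.2.le
    have : f lam - f x = f' c * (lam - x) := by
      rw [hceq]; rw [div_mul_cancel₀]
      intro hh; simp only [sub_eq_zero] at hh; exact absurd hh (by linarith)
    nlinarith [hle, this, sub_pos.mpr h]
  · simp [h]
  · have hcont : ContinuousOn f (Set.Icc lam x) := by
      intro t ht
      exact (hd t (lt_of_lt_of_le hlam ht.1)).continuousAt.continuousWithinAt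
    obtain ⟨c, hc, hceq⟩ := exists_hasDerivAt_eq_slope f f' h hcont
      (fun t ht => hd t (lt_trans hlam ht.1))
    have hle : f' c ≤ f' lam := deriv_antitone hlam hc.1.le
    have : f x - f lam = f' c * (x - lam) := by
      rw [hceq]; rw [div_mul_cancel₀]
      intro hh; simp only [sub_eq_zero] at hh; exact absurd hh (by linarith)
    nlinarith [hle, this, sub_pos.mpr h]

lemma Cid (k L : ℝ) (h0 : k ≠ 0) (h1 : k - 1 ≠ 0) :
    (1/k + L/2 - 1 + k/(2*(k-1))) - (1/2 - 1/k)*(L-1) = L/k + 1/(2*(k-1)) := by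
  field_simp; ring

lemma betaK_eq2 (K : ℕ) (hK : 3 ≤ K) :
    betaK K = Real.exp (-(1 / (K : ℝ) + Real.log ((K : ℝ) - 1) / 2 - 1
      + (K : ℝ) / (2 * ((K : ℝ) - 1))) / (1 / 2 - 1 / (K : ℝ))) := by
  have hk : (3:ℝ) ≤ (K:ℝ) := by exact_mod_cast hK
  rw [betaK, Real.log_sqrt (by linarith)]

lemma dpos (K : ℕ) (hK : 3 ≤ K) : (0:ℝ) < 1/2 - 1/(K:ℝ) := by
  have hk : (3:ℝ) ≤ (K:ℝ) := by exact_mod_cast hK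
  rw [sub_pos, div_lt_div_iff₀ (by linarith) (by linarith)]; linarith

lemma sqrt_le_of_le_sq {x b : ℝ} (hb : 0 ≤ b) (h : x ≤ b^2) : Real.sqrt x ≤ b := by
  calc Real.sqrt x ≤ Real.sqrt (b^2) := Real.sqrt_le_sqrt h
    _ = b := Real.sqrt_sq hb

lemma betaK_pos (K : ℕ) : 0 < betaK K := Real.exp_pos _

set_option maxHeartbeats 1000000 in
lemma betaK_le_one_aux (K : ℕ) (hK : 3 ≤ K) :
    betaK K ≤ 5/8 ∧ betaK K + Real.sqrt (betaK K / ((K : ℝ) - 1)) ≤ 1 := by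
  have hk : (3:ℝ) ≤ (K:ℝ) := by exact_mod_cast hK
  have hk1 : (2:ℝ) ≤ (K:ℝ) - 1 := by linarith
  have hd : (0:ℝ) < 1/2 - 1/(K:ℝ) := dpos K hK
  have hbeq := betaK_eq2 K hK
  have hbnn : 0 ≤ betaK K := (betaK_pos K).le
  have hln2 : (1/2:ℝ) ≤ Real.log 2 := by
    have := Real.log_le_sub_one_of_pos (by norm_num : (0:ℝ) < 1/2)
    have h2 : Real.log (1/2) = -Real.log 2 := by
      rw [one_div, Real.log_inv]
    linarith
  have main : betaK K ≤ 1/4 ∨ betaK K ≤ (68/25 : ℝ) / ((K:ℝ) - 1) ∧ (6:ℝ) ≤ (K:ℝ) := by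
    by_cases h6 : (6:ℝ) ≤ (K:ℝ)
    · right
      refine ⟨?_, h6⟩
      set k : ℝ := (K:ℝ)
      set L : ℝ := Real.log (k - 1) with hL
      have hLnn : 0 ≤ L := Real.log_nonneg (by linarith)
      have hid := Cid k L (by linarith) (by linarith)
      have hCd : (1/2 - 1/k) * (L - 1) ≤ 1/k + L/2 - 1 + k/(2*(k-1)) := by
        have h1 : 0 ≤ L/k := by positivity
        have h2 : (0:ℝ) < 1/(2*(k-1)) := by positivity
        linarith
      have hble : betaK K ≤ Real.exp 1 / (k - 1) := by
        rw [hbeq]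
        have hexp : -(1/k + L/2 - 1 + k/(2*(k-1))) / (1/2 - 1/k) ≤ 1 - L := by
          rw [div_le_iff₀ hd]; nlinarith
        calc Real.exp _ ≤ Real.exp (1 - L) := Real.exp_le_exp.mpr hexp
          _ = Real.exp 1 / (k-1) := by
              rw [Real.exp_sub, hL, Real.exp_log (by linarith)]
      refine le_trans hble ?_
      apply div_le_div_of_nonneg_right ?_ (by linarith)
      refine le_trans Real.exp_one_lt_d9.le (by norm_num)
    · left
      push_neg at h6
      have hK6 : K < 6 := by exact_mod_cast h6
      -- show C ≥ (1/2 - 1/k) * log 4, then betaK ≤ exp(-log 4) = 1/4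
      have key : (1/2 - 1/(K:ℝ)) * Real.log 4 ≤
          1/(K:ℝ) + Real.log ((K:ℝ)-1)/2 - 1 + (K:ℝ)/(2*((K:ℝ)-1)) := by
        have hl4 : Real.log 4 = 2 * Real.log 2 := by
          rw [show (4:ℝ) = 2^2 by norm_num, Real.log_pow]; push_cast; ring
        interval_cases K
        · -- K = 3
          norm_num [hl4]
          have : Real.log 2 ≥ 0 := Real.log_nonneg (by norm_num)
          nlinarith
        · -- K = 4
          norm_num [hl4]
          have h32 : (1/3:ℝ) ≤ Real.log 3 - Real.log 2 := by
            have h1 := Real.log_le_sub_one_of_pos (by norm_num : (0:ℝ) < 2/3)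
            have h2 : Real.log (2/3) = Real.log 2 - Real.log 3 :=
              Real.log_div (by norm_num) (by norm_num)
            rw [h2] at h1; linarith
          nlinarith
        · -- K = 5
          norm_num [hl4]
          nlinarith
      have : betaK K ≤ Real.exp (-Real.log 4) := by
        rw [hbeq]; apply Real.exp_le_exp.mpr
        rw [div_le_iff₀ hd]; nlinarith
      rw [Real.exp_neg, Real.exp_log (by norm_num : (0:ℝ) < 4)] at this
      linarith
  rcases main with hb | ⟨hb, h6⟩
  · constructor
    · linarith
    · have hs : Real.sqrt (betaK K / ((K:ℝ)-1)) ≤ 3/8 := by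
        have h1 : betaK K / ((K:ℝ)-1) ≤ (3/8)^2 := by
          rw [div_le_iff₀ (by linarith : (0:ℝ) < (K:ℝ)-1)]
          nlinarith
        exact sqrt_le_of_le_sq (by norm_num) h1
      linarith
  · have hk15 : (5:ℝ) ≤ (K:ℝ) - 1 := by linarith
    have hb' : betaK K ≤ (68/125 : ℝ) := by
      refine le_trans hb ?_
      rw [div_le_div_iff₀ (by linarith) (by norm_num)]
      nlinarith
    refine ⟨by linarith, ?_⟩
    have hs : Real.sqrt (betaK K / ((K:ℝ)-1)) ≤ (33/20 : ℝ)/((K:ℝ)-1) := by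
      have h1 : betaK K / ((K:ℝ)-1) ≤ ((33/20 : ℝ)/((K:ℝ)-1))^2 := by
        rw [div_pow, div_le_div_iff₀ (by linarith) (by nlinarith : (0:ℝ) < ((K:ℝ)-1)^2)]
        have hmul : betaK K * ((K:ℝ)-1) ≤ 68/25 := by
          rw [le_div_iff₀ (by linarith : (0:ℝ) < (K:ℝ)-1)] at hb
          linarith
        have e1 : betaK K * ((K:ℝ)-1)^2 = (betaK K * ((K:ℝ)-1)) * ((K:ℝ)-1) := by ring
        have e2 : (betaK K * ((K:ℝ)-1)) * ((K:ℝ)-1) ≤ (68/25) * ((K:ℝ)-1) :=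
          mul_le_mul_of_nonneg_right hmul (by linarith)
        have e3 : ((33/20:ℝ))^2 = 1089/400 := by norm_num
        rw [e1, e3]; linarith
      exact sqrt_le_of_le_sq (div_nonneg (by norm_num) (by linarith)) h1
    have h2 : ((33/20 : ℝ))/((K:ℝ)-1) ≤ (33/100 : ℝ) := by
      rw [div_le_iff₀ (by linarith)]; linarith
    have h3 : betaK K ≤ (68/125 : ℝ) := hb'
    linarith

lemma rhs_id (k La Lk1 a : ℝ) (hk0 : k ≠ 0) (hk10 : k - 1 ≠ 0) (hk2 : k - 2 ≠ 0) (hd0 : 1/2 - 1/k ≠ 0) :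
    (1/2 - 1/k) * a * (La - (-(1/k + Lk1/2 - 1 + k/(2*(k-1))) / (1/2 - 1/k))) =
    (1/k) * (-(a*La) + a) + (a*La - a*(La - Lk1)/2) + (-a + k*a/(2*(k-1))) := by
  field_simp
  ring

set_option maxHeartbeats 1000000 in
lemma JK_bound (K : ℕ) (hK : 3 ≤ K) (c : ℝ) (hc : c ∈ Set.Ioo (2:ℝ) (K:ℝ))
    (lam : ℝ) (hlam : 0 < lam) (hQ : Qfun lam = c)
    (a : ℝ) (ha : a ∈ Set.Ioo (0:ℝ) (betaK K)) :
    JK K a (Real.sqrt (a / ((K : ℝ) - 1))) (1 - a) c lam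
      ≤ (1/2 - 1/(K : ℝ)) * a * Real.log (a / betaK K) := by
  obtain ⟨ha0, hab⟩ := ha
  obtain ⟨hc2, hcK⟩ := hc
  have hk : (3:ℝ) ≤ (K:ℝ) := by exact_mod_cast hK
  have hk1 : (2:ℝ) ≤ (K:ℝ) - 1 := by linarith
  have hd : (0:ℝ) < 1/2 - 1/(K:ℝ) := dpos K hK
  have hbpos : (0:ℝ) < betaK K := Real.exp_pos _
  obtain ⟨hb58, hbsum⟩ := betaK_le_one_aux K hK
  set s : ℝ := Real.sqrt (a / ((K:ℝ) - 1)) with hs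
  have hs0 : 0 < s := Real.sqrt_pos.mpr (by positivity)
  have hssq : s^2 = a / ((K:ℝ)-1) := Real.sq_sqrt (by positivity)
  have hsle : s ≤ Real.sqrt (betaK K / ((K:ℝ)-1)) := by
    apply Real.sqrt_le_sqrt
    apply div_le_div_of_nonneg_right hab.le (by linarith)
  have has1 : a + s < 1 := by
    have : a + s < betaK K + Real.sqrt (betaK K / ((K:ℝ)-1)) := by
      have := hsle; linarith
    linarith
  have ha1 : a < 1 := by linarith
  have h1a : (0:ℝ) < 1 - a := by linarith
  have hc0 : (0:ℝ) < c := by linarith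
  -- exp2 facts
  have h2lam : 0 < exp2 lam := exp2_pos hlam.ne'
  have hm : c = lam * ((Real.exp lam - 1) / exp2 lam) := by
    rw [← hQ, Qfun, exp2, mul_div_assoc]
  set m : ℝ := (Real.exp lam - 1) / exp2 lam with hmdef
  -- the two arguments
  have hx1 : 0 < lam * ((1-a) + s) := by positivity
  have hx2 : 0 < lam * ((1-a) - s) := by
    apply mul_pos hlam; linarith
  have hb1 : exp2 (lam * ((1-a) + s)) ≤ exp2 lam * Real.exp (c * (s - a)) := by
    have ht := tangent hlam hx1
    have h2x : 0 < exp2 (lam * ((1-a)+s)) := exp2_pos hx1.ne'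
    have harg : m * (lam * ((1-a)+s) - lam) = c * (s - a) := by
      rw [hm]; ring
    calc exp2 (lam * ((1-a)+s)) = Real.exp (Real.log (exp2 (lam * ((1-a)+s)))) :=
          (Real.exp_log h2x).symm
      _ ≤ Real.exp (Real.log (exp2 lam) + m * (lam * ((1-a)+s) - lam)) :=
          Real.exp_le_exp.mpr ht
      _ = exp2 lam * Real.exp (c * (s-a)) := by
          rw [Real.exp_add, Real.exp_log h2lam, harg]
  have hb2 : exp2 (lam * ((1-a) - s)) ≤ exp2 lam * Real.exp (c * (-s - a)) := by
    have ht := tangent hlam hx2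
    have h2x : 0 < exp2 (lam * ((1-a)-s)) := exp2_pos hx2.ne'
    have harg : m * (lam * ((1-a)-s) - lam) = c * (-s - a) := by
      rw [hm]; ring
    calc exp2 (lam * ((1-a)-s)) = Real.exp (Real.log (exp2 (lam * ((1-a)-s)))) :=
          (Real.exp_log h2x).symm
      _ ≤ Real.exp (Real.log (exp2 lam) + m * (lam * ((1-a)-s) - lam)) :=
          Real.exp_le_exp.mpr ht
      _ = exp2 lam * Real.exp (c * (-s-a)) := by
          rw [Real.exp_add, Real.exp_log h2lam, harg]
  -- bound the log term
  have hNpos : 0 < exp2 (lam * ((1-a) + s)) + exp2 (lam * ((1-a) - s)) :=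
    add_pos (exp2_pos hx1.ne') (exp2_pos hx2.ne')
  have hsumexp : Real.exp (c*(s-a)) + Real.exp (c*(-s-a))
      = 2 * Real.exp (-(c*a)) * Real.cosh (c*s) := by
    rw [Real.cosh_eq, show c*(s-a) = -(c*a) + c*s by ring,
      show c*(-s-a) = -(c*a) + -(c*s) by ring, Real.exp_add, Real.exp_add]
    ring
  have hcosh : Real.cosh (c*s) ≤ Real.exp ((c*s)^2/2) := Real.cosh_le_exp_half_sq _
  have hlog4 : Real.log ((exp2 (lam * ((1-a) + s)) + exp2 (lam * ((1-a) - s)))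
      / (2 * exp2 lam)) ≤ -(c*a) + (c*s)^2/2 := by
    have hquot : (exp2 (lam * ((1-a) + s)) + exp2 (lam * ((1-a) - s))) / (2 * exp2 lam)
        ≤ Real.exp (-(c*a)) * Real.cosh (c*s) := by
      rw [div_le_iff₀ (by positivity)]
      calc exp2 (lam * ((1-a) + s)) + exp2 (lam * ((1-a) - s))
          ≤ exp2 lam * Real.exp (c*(s-a)) + exp2 lam * Real.exp (c*(-s-a)) := by
            linarith
        _ = (Real.exp (c*(s-a)) + Real.exp (c*(-s-a))) * exp2 lam := by ring
        _ = Real.exp (-(c*a)) * Real.cosh (c*s) * (2 * exp2 lam) := by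
            rw [hsumexp]; ring
    calc Real.log ((exp2 (lam * ((1-a) + s)) + exp2 (lam * ((1-a) - s))) / (2 * exp2 lam))
        ≤ Real.log (Real.exp (-(c*a)) * Real.cosh (c*s)) := by
          apply Real.log_le_log (by positivity) hquot
      _ = -(c*a) + Real.log (Real.cosh (c*s)) := by
          rw [Real.log_mul (Real.exp_ne_zero _) (by positivity), Real.log_exp]
      _ ≤ -(c*a) + (c*s)^2/2 := by
          have := Real.log_le_log (Real.cosh_pos _) hcosh
          rw [Real.log_exp] at this; linarith
  have hterm4 : (1/c) * Real.log ((exp2 (lam * ((1-a) + s)) + exp2 (lam * ((1-a) - s)))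
      / (2 * exp2 lam)) ≤ -a + (K:ℝ) * a / (2*((K:ℝ)-1)) := by
    have h1 : (1/c) * Real.log ((exp2 (lam * ((1-a) + s)) + exp2 (lam * ((1-a) - s)))
        / (2 * exp2 lam)) ≤ (1/c) * (-(c*a) + (c*s)^2/2) :=
      mul_le_mul_of_nonneg_left hlog4 (by positivity)
    have h2 : (1/c) * (-(c*a) + (c*s)^2/2) = -a + c * s^2 / 2 := by
      field_simp
    have h3 : c * s^2 / 2 ≤ (K:ℝ) * s^2 / 2 := by nlinarith [sq_nonneg s]
    have h4 : (K:ℝ) * s^2 / 2 = (K:ℝ) * a / (2*((K:ℝ)-1)) := by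
      rw [hssq]; field_simp
    linarith
  -- entropy bound
  have hHent : Hent a ≤ -(a * Real.log a) + a := by
    have hlog : -Real.log (1-a) ≤ a / (1-a) := by
      have h1 := Real.log_le_sub_one_of_pos (show (0:ℝ) < (1-a)⁻¹ by positivity)
      rw [Real.log_inv] at h1
      have : (1-a)⁻¹ - 1 = a / (1-a) := by field_simp; ring
      linarith
    have : -((1-a) * Real.log (1-a)) ≤ a := by
      have := mul_le_mul_of_nonneg_left hlog h1a.le
      calc -((1-a) * Real.log (1-a)) = (1-a) * (-Real.log (1-a)) := by ring
        _ ≤ (1-a) * (a / (1-a)) := this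
        _ = a := by field_simp
    simp only [Hent]; linarith
  have hterm1 : (1/(K:ℝ)) * Hent a ≤ (1/(K:ℝ)) * (-(a * Real.log a) + a) :=
    mul_le_mul_of_nonneg_left hHent (by positivity)
  -- second term identity
  have hlogs : Real.log s = (Real.log a - Real.log ((K:ℝ)-1)) / 2 := by
    rw [hs, Real.log_sqrt (by positivity), Real.log_div (ne_of_gt ha0) (by linarith)]
  have hterm2 : a * Real.log (a / s) = a * Real.log a - a * (Real.log a - Real.log ((K:ℝ)-1))/2 := by
    rw [Real.log_div (ne_of_gt ha0) (ne_of_gt hs0), hlogs]; ring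
  -- third term is zero
  have hterm3 : (1 - a) * Real.log ((1-a)/(1-a)) = 0 := by
    rw [div_self (ne_of_gt h1a), Real.log_one, mul_zero]
  -- log betaK
  have hlogb : Real.log (betaK K) =
      -(1/(K:ℝ) + Real.log ((K:ℝ)-1)/2 - 1 + (K:ℝ)/(2*((K:ℝ)-1))) / (1/2 - 1/(K:ℝ)) := by
    rw [betaK_eq2 K hK, Real.log_exp]
  -- final assembly
  have hrhs : (1/2 - 1/(K:ℝ)) * a * Real.log (a / betaK K) =
      (1/(K:ℝ)) * (-(a * Real.log a) + a)
      + (a * Real.log a - a * (Real.log a - Real.log ((K:ℝ)-1))/2)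
      + (-a + (K:ℝ) * a / (2*((K:ℝ)-1))) := by
    rw [Real.log_div (ne_of_gt ha0) (ne_of_gt hbpos), hlogb]
    exact rhs_id (K:ℝ) (Real.log a) (Real.log ((K:ℝ)-1)) a
      (by linarith) (by linarith) (by linarith) (ne_of_gt hd)
  rw [JK, hterm3]
  rw [hterm2] at *
  linarith [hterm1, hterm4]

theorem stmt13 (K : ℕ) (hK : 3 ≤ K) :
    (∀ c ∈ Set.Ioo (2:ℝ) (K : ℝ), ∀ lam : ℝ, 0 < lam → Qfun lam = c →
      ∀ a ∈ Set.Ioo (0:ℝ) (betaK K),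
        JK K a (Real.sqrt (a / ((K : ℝ) - 1))) (1 - a) c lam
          ≤ (1/2 - 1/(K : ℝ)) * a * Real.log (a / betaK K)) ∧
    (∀ a ∈ Set.Ioo (0:ℝ) (betaK K),
      (1/2 - 1/(K : ℝ)) * a * Real.log (a / betaK K) < 0) ∧
    (∀ δ > (0:ℝ), ∃ ε > (0:ℝ), ∀ a ∈ Set.Icc δ (0.99 * betaK K),
      ∀ c ∈ Set.Ioo (2:ℝ) (K : ℝ), ∀ lam : ℝ, 0 < lam → Qfun lam = c →
        JK K a (Real.sqrt (a / ((K : ℝ) - 1))) (1 - a) c lam < -ε) := by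
  have hk : (3:ℝ) ≤ (K:ℝ) := by exact_mod_cast hK
  have hd : (0:ℝ) < 1/2 - 1/(K:ℝ) := dpos K hK
  have hbpos : (0:ℝ) < betaK K := Real.exp_pos _
  refine ⟨?_, ?_, ?_⟩
  · intro c hc lam hlam hQ a ha
    exact JK_bound K hK c hc lam hlam hQ a ha
  · rintro a ⟨ha0, hab⟩
    apply mul_neg_of_pos_of_neg (mul_pos hd ha0)
    apply Real.log_neg (by positivity)
    rw [div_lt_one hbpos]; exact hab
  · intro δ hδ
    have hl : (0:ℝ) < Real.log (100/99) := Real.log_pos (by norm_num)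
    refine ⟨(1/2 - 1/(K:ℝ)) * δ * Real.log (100/99) / 2, by positivity, ?_⟩
    rintro a ⟨haδ, ha99⟩ c hc lam hlam hQ
    have ha0 : 0 < a := lt_of_lt_of_le hδ haδ
    have hab : a < betaK K := by
      refine lt_of_le_of_lt ha99 ?_
      nlinarith
    have h1 := JK_bound K hK c hc lam hlam hQ a ⟨ha0, hab⟩
    have hlog : Real.log (a / betaK K) ≤ -Real.log (100/99) := by
      have hle : a / betaK K ≤ 0.99 := by
        rw [div_le_iff₀ hbpos]; linarith
      have := Real.log_le_log (by positivity : (0:ℝ) < a / betaK K) hle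
      have h99 : Real.log (0.99 : ℝ) = -Real.log (100/99) := by
        rw [show (0.99:ℝ) = (100/99)⁻¹ by norm_num, Real.log_inv]
      linarith [h99 ▸ this]
    have h2 : (1/2 - 1/(K:ℝ)) * a * Real.log (a / betaK K)
        ≤ -((1/2 - 1/(K:ℝ)) * δ * Real.log (100/99)) := by
      have hda : 0 < (1/2 - 1/(K:ℝ)) * a := mul_pos hd ha0
      have step1 : (1/2 - 1/(K:ℝ)) * a * Real.log (a / betaK K)
          ≤ (1/2 - 1/(K:ℝ)) * a * (-Real.log (100/99)) :=
        mul_le_mul_of_nonneg_left hlog hda.le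
      have step2 : (1/2 - 1/(K:ℝ)) * δ * Real.log (100/99)
          ≤ (1/2 - 1/(K:ℝ)) * a * Real.log (100/99) :=
        mul_le_mul_of_nonneg_right (mul_le_mul_of_nonneg_left haδ hd.le) hl.le
      nlinarith
    have hX : 0 < (1/2 - 1/(K:ℝ)) * δ * Real.log (100/99) := by positivity
    linarith
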